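/- arXiv:1009.5014 — 2 statements merged into one kernel-verified Lean document; each statement's English description precedes it below -/
import Mathlib

section
/- If φ: R → U is a supervaluation on a semiring R, then the set ⟨φ(R)⟩ := φ(R) ∪ e·φ(R) is a subsemiring of U. -/
structure IsSupertropical (U : Type*) [CommSemiring U] : Prop where
  /-- ST1 : `e` is additively idempotent, `e + e = e`. -/
  st1 : (1 + 1 : U) + (1 + 1) = (1 + 1)
  /-- ST2 : the semiring `eU` is bipotent. -/
  st2 : ∀ x y : U,
    (1 + 1) * x + (1 + 1) * y = (1 + 1) * x ∨
    (1 + 1) * x + (1 + 1) * y = (1 + 1) * y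
  /-- ST3 : if `ex < ey` then `x + y = y`. -/
  st3 : ∀ x y : U,
    (1 + 1) * x + (1 + 1) * y = (1 + 1) * y → (1 + 1) * x ≠ (1 + 1) * y →
      x + y = y
  /-- ST4 : if `ex = ey` then `x + y = ex`. -/
  st4 : ∀ x y : U, (1 + 1) * x = (1 + 1) * y → x + y = (1 + 1) * x

/-- A supertropical semifield: a supertropical semiring satisfying ST5
(tangibles and nonzero ghosts are closed under multiplication) in which the
tangible elements form a group (with unit `1`) and the nonzero ghosts form a
group (with unit `e`). Tangible means not of the form `(1+1) * w`. -/
structure IsSupertropicalSemifield (U : Type*) [CommSemiring U] extends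
    IsSupertropical U : Prop where
  st5_tangible : ∀ x y : U, ¬(∃ w, x = (1 + 1) * w) → ¬(∃ w, y = (1 + 1) * w) →
    ¬(∃ w, x * y = (1 + 1) * w)
  st5_ghost : ∀ x y : U, (∃ w, x = (1 + 1) * w) → x ≠ 0 →
    (∃ w, y = (1 + 1) * w) → y ≠ 0 → (∃ w, x * y = (1 + 1) * w) ∧ x * y ≠ 0
  tangible_group : ∀ x : U, ¬(∃ w, x = (1 + 1) * w) →
    ∃ y : U, ¬(∃ w, y = (1 + 1) * w) ∧ x * y = 1
  ghost_group : ∀ x : U, (∃ w, x = (1 + 1) * w) → x ≠ 0 →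
    ∃ y : U, ((∃ w, y = (1 + 1) * w) ∧ y ≠ 0) ∧ x * y = (1 + 1)

/-- A supervaluation `φ : R → U` into a supertropical semifield: `φ 0 = 0`,
`φ 1 = 1`, `φ` is multiplicative, and `e φ(a+b) ≤ e φ(a) + e φ(b)` where the
order on `eU` is `u ≤ v ⟺ u + v = v`. -/
structure IsSupervaluation (R U : Type*) [CommSemiring R] [CommSemiring U]
    (φ : R → U) : Prop where
  map_zero : φ 0 = 0
  map_one : φ 1 = 1
  map_mul : ∀ a b : R, φ (a * b) = φ a * φ b
  subadd : ∀ a b : R,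
    (1 + 1) * φ (a + b) + ((1 + 1) * φ a + (1 + 1) * φ b)
      = (1 + 1) * φ a + (1 + 1) * φ b

/-- If `φ : R → U` is a supervaluation, then `⟨φ(R)⟩ = φ(R) ∪ e·φ(R)` is a
subsemiring of `U`: it contains `0` and `1` and is closed under addition and
multiplication. -/
theorem stmt14 (R U : Type*) [CommSemiring R] [CommSemiring U]
    (hU : IsSupertropicalSemifield U) (φ : R → U)
    (hφ : IsSupervaluation R U φ) :
    ((∃ a, (0 : U) = φ a) ∨ (∃ a, (0 : U) = (1 + 1) * φ a)) ∧
    ((∃ a, (1 : U) = φ a) ∨ (∃ a, (1 : U) = (1 + 1) * φ a)) ∧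
    (∀ x y : U,
      ((∃ a, x = φ a) ∨ (∃ a, x = (1 + 1) * φ a)) →
      ((∃ a, y = φ a) ∨ (∃ a, y = (1 + 1) * φ a)) →
      (((∃ a, x + y = φ a) ∨ (∃ a, x + y = (1 + 1) * φ a)) ∧
       ((∃ a, x * y = φ a) ∨ (∃ a, x * y = (1 + 1) * φ a)))) := by
  have ee : ((1 : U) + 1) * (1 + 1) = 1 + 1 := by
    calc ((1 : U) + 1) * (1 + 1) = (1 + 1) + (1 + 1) := by ring
      _ = 1 + 1 := hU.st1
  refine ⟨Or.inl ⟨0, hφ.map_zero.symm⟩, Or.inl ⟨1, hφ.map_one.symm⟩, fun x y hx hy => ⟨?_, ?_⟩⟩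
  · by_cases heq : (1 + 1) * x = (1 + 1) * y
    · have h4 := hU.st4 x y heq
      rcases hx with ⟨a, rfl⟩ | ⟨a, rfl⟩
      · right; exact ⟨a, h4⟩
      · right
        refine ⟨a, ?_⟩
        rw [h4, ← mul_assoc, ee]
    · rcases hU.st2 x y with h | h
      · have hyx := hU.st3 y x (by rwa [add_comm]) (fun hc => heq hc.symm)
        rw [add_comm x y, hyx]; exact hx
      · rw [hU.st3 x y h heq]; exact hy
  · rcases hx with ⟨a, rfl⟩ | ⟨a, rfl⟩ <;> rcases hy with ⟨b, rfl⟩ | ⟨b, rfl⟩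
    · left; exact ⟨a * b, by rw [hφ.map_mul]⟩
    · right; exact ⟨a * b, by rw [hφ.map_mul]; ring⟩
    · right; exact ⟨a * b, by rw [hφ.map_mul]; ring⟩
    · right
      refine ⟨a * b, ?_⟩
      rw [hφ.map_mul,
        show ((1 + 1 : U) * φ a) * ((1 + 1) * φ b) = ((1 + 1) * (1 + 1)) * (φ a * φ b) by ring,
        ee]
end

section
/- A supervaluation φ: R → U covering a strong valuation v is strong (i.e., φ(a)+φ(b) tangible implies φ(a+b) = φ(a)+φ(b)) if and only if for all a,b ∈ R: φ(a)+φ(b) ⊨ φ(a+b), where ⊨ is the ghost surpassing relation. -/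
/-- A supervaluation `φ` covering a strong valuation `v = e ∘ φ` is strong
(`φ a + φ b` tangible implies `φ (a+b) = φ a + φ b`) iff
`φ a + φ b ⊨ φ (a+b)` for all `a, b`, where `⊨` is the ghost surpassing
relation. -/
theorem stmt18 (R U : Type*) [CommSemiring R] [CommSemiring U]
    (hU : IsSupertropicalSemifield U) (φ : R → U)
    (hφ : IsSupervaluation R U φ)
    (hv_strong : ∀ a b : R, (1 + 1) * φ a ≠ (1 + 1) * φ b →
      (1 + 1) * φ (a + b) = (1 + 1) * φ a + (1 + 1) * φ b) :
    (∀ a b : R, ¬(∃ w, φ a + φ b = (1 + 1) * w) → φ (a + b) = φ a + φ b) ↔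
    (∀ a b : R, ∃ w, φ a + φ b = φ (a + b) + (1 + 1) * w) := by
  have hee : ((1 : U) + 1) * (1 + 1) = 1 + 1 := by
    calc ((1 : U) + 1) * (1 + 1) = (1 + 1) + (1 + 1) := by ring
    _ = 1 + 1 := hU.st1
  constructor
  · intro hstrong a b
    by_cases ht : ∃ w, φ a + φ b = (1 + 1) * w
    · obtain ⟨w, hw⟩ := ht
      refine ⟨w, ?_⟩
      have hg : ((1 : U) + 1) * ((1 + 1) * w) = (1 + 1) * w := by
        rw [← mul_assoc, hee]
      -- e φ(a+b) + e*w = e*w, from subadd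
      have hsub : (1 + 1) * φ (a + b) + (1 + 1) * w = (1 + 1) * w := by
        have := hφ.subadd a b
        have h2 : (1 + 1) * φ a + (1 + 1) * φ b = (1 + 1) * w := by
          rw [← mul_add, hw, hg]
        rw [h2] at this; exact this
      -- φ(a+b) + e*w = e*w
      have key : φ (a + b) + (1 + 1) * w = (1 + 1) * w := by
        by_cases heq : (1 + 1) * φ (a + b) = (1 + 1) * ((1 + 1) * w)
        · rw [hU.st4 _ _ heq, heq, hg]
        · exact hU.st3 _ _ (by rw [hg]; exact hsub) (by rw [hg] at heq ⊢; exact heq)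
      rw [hw, key]
    · exact ⟨0, by rw [hstrong a b ht, mul_zero, add_zero]⟩
  · intro h a b htang
    obtain ⟨w, hw⟩ := h a b
    have hg : ((1 : U) + 1) * ((1 + 1) * w) = (1 + 1) * w := by
      rw [← mul_assoc, hee]
    by_cases heq : (1 + 1) * φ (a + b) = (1 + 1) * ((1 + 1) * w)
    · exact absurd ⟨φ (a + b), by rw [hw, hU.st4 _ _ heq]⟩ htang
    · rcases hU.st2 (φ (a + b)) ((1 + 1) * w) with hc | hc
      · have := hU.st3 ((1 + 1) * w) (φ (a + b))
          (by rw [add_comm]; exact hc) (fun hne => heq hne.symm)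
        rw [hw, add_comm (φ (a + b)), this]
      · have := hU.st3 _ _ hc heq
        exact absurd ⟨w, by rw [hw]; exact this⟩ htang
end
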